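/- For nonnegative integers N ≥ 1 and ℓ ≥ 0, one has (1/2)∫_{−1}^1 N ((1+t)/2)^{N−1} P_ℓ(t) dt = ∑_{k=0}^ℓ (−1)^k C(ℓ,k)·C(ℓ+k,k)/C(N+k,k). -/

import Mathlib

/-- The Legendre polynomial of degree `n` (normalized so `P n 1 = 1`),
via the Rodrigues formula. -/
noncomputable def legendreP (n : ℕ) : Polynomial ℝ :=
  Polynomial.C (1 / ((2:ℝ)^n * n.factorial)) *
    (Polynomial.derivative^[n] ((Polynomial.X^2 - 1)^n))

/-!
With `u = (1 - t) / 2` one has `t ^ 2 - 1 = -4 u (1 - u)`, so Rodrigues' formula turns `P_ℓ(t)`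
into the shifted Legendre polynomial `∑ (-1)^k C(ℓ,k) C(ℓ+k,k) u^k`. Substituting
`s = (1 + t) / 2`, so that `u = 1 - s`, the integral becomes a combination of Beta integrals
`N ∫₀¹ s^(N-1) (1 - s)^k ds = 1 / C(N+k,k)`, which follow by induction on `k` from
`s^m (1 - s)^(k+1) = s^m (1 - s)^k - s^(m+1) (1 - s)^k`.
-/

open Polynomial Nat

theorem Polynomial.iterate_derivative_comp_C_mul_X_add_C {R : Type*} [CommRing R]
    (p : R[X]) (a b : R) (k : ℕ) :
    derivative^[k] (p.comp (C a * X + C b)) =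
      C a ^ k * (derivative^[k] p).comp (C a * X + C b) := by
  induction k generalizing p with
  | zero => simp
  | succ k ih => simp [ih (derivative p), derivative_comp, pow_succ, mul_assoc, mul_left_comm]

theorem legendreP_eq_shiftedLegendre_comp (n : ℕ) :
    legendreP n =
      ((shiftedLegendre n).map (Int.castRingHom ℝ)).comp (C (-1/2) * X + C (1/2)) := by
  set u : ℝ[X] := C (-1/2) * X + C (1/2)
  have hsubst : (X ^ 2 - 1 : ℝ[X]) ^ n =
      C ((-4) ^ n) * (X ^ n * (1 - X) ^ n : ℝ[X]).comp u := by
    have hC : C (1/2 : ℝ) * 2 = 1 := by rw [← C_ofNat, ← C_mul]; norm_num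
    have hCneg : C (-1/2 : ℝ) = - C (1/2) := by rw [← C_neg]; norm_num
    rw [mul_comp, pow_comp, pow_comp, X_comp, sub_comp, one_comp, X_comp, C_pow, ← mul_pow,
      ← mul_pow, ← mul_assoc]
    congr 1
    simp only [u, hCneg, C_neg, map_ofNat]
    linear_combination (1 - X ^ 2 - 2 * (1 - X) ^ 2 * C (1/2)) * hC
  have hrodrigues := congrArg (map (Int.castRingHom ℝ)) (factorial_mul_shiftedLegendre_eq n)
  simp only [Polynomial.map_mul, Polynomial.map_natCast, ← iterate_derivative_map,
    Polynomial.map_pow, Polynomial.map_X, Polynomial.map_sub, Polynomial.map_one] at hrodrigues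
  rw [legendreP, hsubst, iterate_derivative_C_mul, iterate_derivative_comp_C_mul_X_add_C, ← hrodrigues,
    mul_comp, natCast_comp, ← C_pow, ← C_eq_natCast, ← mul_assoc, ← mul_assoc, ← C_mul,
    ← C_mul, ← mul_assoc, ← C_mul]
  -- `(-4) ^ n` comes from `X ^ 2 - 1 = -4 u (1 - u)`, `(-1 / 2) ^ n` from the chain rule
  have hconst : 1 / (2 ^ n * n ! : ℝ) * (-4) ^ n * (-1 / 2) ^ n * n ! = 1 := by
    rw [mul_assoc _ ((-4 : ℝ) ^ n), ← mul_pow]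
    field_simp
    norm_num
  rw [hconst, C_1, one_mul]

theorem legendreP_eval (l : ℕ) (t : ℝ) :
    (legendreP l).eval t = ∑ k ∈ Finset.range (l + 1),
      (-1) ^ k * (l.choose k : ℝ) * ((l + k).choose k : ℝ) * ((1 - t) / 2) ^ k := by
  simp only [legendreP_eq_shiftedLegendre_comp, eval_comp, eval_map, shiftedLegendre,
    eval₂_finsetSum, eval₂_mul, eval₂_C, eval₂_X_pow, eval_add, eval_mul, eval_C, eval_X]
  refine Finset.sum_congr rfl fun k _ => ?_
  rw [choose_symm_add, eq_intCast]
  push_cast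
  ring

theorem integral_pow_mul_one_sub_pow (m k : ℕ) :
    ∫ s in (0:ℝ)..1, s ^ m * (1 - s) ^ k = m ! * k ! / (m + k + 1)! := by
  induction k generalizing m with
  | zero => simp [integral_pow, factorial_succ, field]
  | succ k ih =>
    have hsplit : ∫ s in (0:ℝ)..1, s ^ m * (1 - s) ^ (k + 1) =
        (∫ s in (0:ℝ)..1, s ^ m * (1 - s) ^ k) -
          ∫ s in (0:ℝ)..1, s ^ (m + 1) * (1 - s) ^ k := by
      rw [← intervalIntegral.integral_sub ((by fun_prop : Continuous _).intervalIntegrable _ _)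
        ((by fun_prop : Continuous _).intervalIntegrable _ _)]
      congr 1 with s
      ring
    rw [hsplit, ih, ih, show m + 1 + k + 1 = m + k + 1 + 1 by ring,
      show m + (k + 1) + 1 = m + k + 1 + 1 by ring, factorial_succ (m + k + 1), factorial_succ m,
      factorial_succ k]
    push_cast
    field_simp
    ring

theorem succ_mul_integral_pow_mul_one_sub_pow (n k : ℕ) :
    (n + 1 : ℝ) * ∫ s in (0:ℝ)..1, s ^ n * (1 - s) ^ k =
      1 / ((n + 1 + k).choose k : ℝ) := by
  rw [integral_pow_mul_one_sub_pow, cast_choose ℝ (by omega : k ≤ n + 1 + k),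
    show n + 1 + k - k = n + 1 by omega, show n + k + 1 = n + 1 + k by ring, factorial_succ n]
  push_cast
  field_simp

theorem integral_comp_one_add_div_two (f : ℝ → ℝ) :
    (1 / 2 : ℝ) * ∫ t in (-1:ℝ)..1, f ((1 + t) / 2) = ∫ s in (0:ℝ)..1, f s := by
  have h := intervalIntegral.integral_comp_mul_add (a := -1) (b := 1) f
    (one_div_ne_zero (two_ne_zero' ℝ)) (1 / 2)
  simp only [show ∀ t : ℝ, 1 / 2 * t + 1 / 2 = (1 + t) / 2 by intro t; ring] at h
  rw [h]
  norm_num [← mul_assoc]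

/-- For `N ≥ 1` and `ℓ ≥ 0`,
`(1/2)∫_{−1}^1 N((1+t)/2)^{N−1} P_ℓ(t) dt
  = ∑_{k=0}^ℓ (−1)^k C(ℓ,k)C(ℓ+k,k)/C(N+k,k)`. -/
theorem stmt_10 (N l : ℕ) (hN : 1 ≤ N) :
    (1/2 : ℝ) * ∫ t in (-1:ℝ)..1, (N:ℝ) * ((1+t)/2)^(N-1) * (legendreP l).eval t =
      ∑ k ∈ Finset.range (l+1), (-1:ℝ)^k * (Nat.choose l k : ℝ) *
        (Nat.choose (l+k) k : ℝ) / (Nat.choose (N+k) k : ℝ) := by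
  obtain ⟨n, rfl⟩ : ∃ n, N = n + 1 := ⟨N - 1, by omega⟩
  have hP : ∀ t : ℝ,
      ((n + 1 : ℕ) : ℝ) * ((1 + t) / 2) ^ (n + 1 - 1) * (legendreP l).eval t =
      ∑ k ∈ Finset.range (l + 1), (-1) ^ k * (l.choose k : ℝ) * ((l + k).choose k : ℝ) *
        ((n + 1) * (((1 + t) / 2) ^ n * (1 - (1 + t) / 2) ^ k)) := by
    intro t
    rw [legendreP_eval, Finset.mul_sum]
    refine Finset.sum_congr rfl fun k _ => ?_
    push_cast
    ring
  simp only [hP]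
  rw [integral_comp_one_add_div_two (fun s => ∑ k ∈ Finset.range (l + 1),
    (-1) ^ k * (l.choose k : ℝ) * ((l + k).choose k : ℝ) * ((n + 1) * (s ^ n * (1 - s) ^ k))),
    intervalIntegral.integral_finsetSum fun k _ =>
      (by fun_prop : Continuous _).intervalIntegrable _ _]
  refine Finset.sum_congr rfl fun k _ => ?_
  rw [intervalIntegral.integral_const_mul, intervalIntegral.integral_const_mul,
    succ_mul_integral_pow_mul_one_sub_pow]
  ring
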